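/- arXiv:2601.14893 — 3 statements merged into one kernel-verified Lean document; each statement's English description precedes it below -/
import Mathlib

section
/- If A, α, β > 0, θ ∈ (0,1), 0 < θ + ωψ < 1, ψ < 1, 0 < ωψ < 1, and ω, ψ have the same sign, then f(k) = A k^θ (α k^ψ + β)^ω satisfies f''(k) < 0 for all k > 0 (strict concavity). -/
open Real Filter Set Topology

/-! With `u = α k^ψ + β`, differentiating twice gives
`f''(k) = A k^(θ-2) u^(ω-2) Q(α k^ψ, β)` for a binary quadratic form `Q` whose three
coefficients `(θ+ωψ)(θ+ωψ-1)`, `2θ(θ+ωψ-1) + ωψ(ψ-1)` and `θ(θ-1)` are all negative. -/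

variable {α β ψ : ℝ}

theorem hasDerivAt_mul_rpow_mul_rpow_add {k : ℝ} (c p q : ℝ) (hk : 0 < k)
    (hu : 0 < α * k ^ ψ + β) :
    HasDerivAt (fun k : ℝ => c * k ^ p * (α * k ^ ψ + β) ^ q)
      (c * p * k ^ (p - 1) * (α * k ^ ψ + β) ^ q
        + c * q * α * ψ * k ^ (p + ψ - 1) * (α * k ^ ψ + β) ^ (q - 1)) k := by
  have hpow (r : ℝ) : HasDerivAt (fun k : ℝ => k ^ r) (r * k ^ (r - 1)) k :=
    hasDerivAt_rpow_const (Or.inl hk.ne')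
  have hbase := (((hpow ψ).const_mul α).add_const β).rpow_const (p := q) (Or.inl hu.ne')
  refine (((hpow p).const_mul c).mul hbase).congr_deriv ?_
  rw [show p + ψ - 1 = p + (ψ - 1) by ring, rpow_add hk]
  ring

theorem deriv_deriv_mul_rpow_mul_rpow_add (A θ ω : ℝ) (hα : 0 ≤ α) (hβ : 0 < β) {k : ℝ}
    (hk : 0 < k) :
    deriv (deriv fun k : ℝ => A * k ^ θ * (α * k ^ ψ + β) ^ ω) k
      = A * k ^ (θ - 2) * (α * k ^ ψ + β) ^ (ω - 2) *
        ((θ + ω * ψ) * (θ + ω * ψ - 1) * (α * k ^ ψ) ^ 2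
          + (2 * θ * (θ + ω * ψ - 1) + ω * ψ * (ψ - 1)) * (α * k ^ ψ) * β
          + θ * (θ - 1) * β ^ 2) := by
  have hu {x : ℝ} (hx : 0 < x) : 0 < α * x ^ ψ + β := by positivity
  have hderiv : deriv (fun k : ℝ => A * k ^ θ * (α * k ^ ψ + β) ^ ω) =ᶠ[𝓝 k]
      fun x => A * θ * x ^ (θ - 1) * (α * x ^ ψ + β) ^ ω
        + A * ω * α * ψ * x ^ (θ + ψ - 1) * (α * x ^ ψ + β) ^ (ω - 1) := by
    filter_upwards [Ioi_mem_nhds hk] with x hx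
    exact (hasDerivAt_mul_rpow_mul_rpow_add A θ ω hx (hu hx)).deriv
  rw [hderiv.deriv_eq, ((hasDerivAt_mul_rpow_mul_rpow_add (A * θ) (θ - 1) ω hk (hu hk)).fun_add
    (hasDerivAt_mul_rpow_mul_rpow_add (A * ω * α * ψ) (θ + ψ - 1) (ω - 1) hk (hu hk))).deriv]
  have huω : (α * k ^ ψ + β) ^ ω = (α * k ^ ψ + β) ^ (ω - 2) * (α * k ^ ψ + β) ^ 2 := by
    rw [← rpow_natCast, ← rpow_add (hu hk)]; norm_num
  rw [huω, show ω - 1 - 1 = ω - 2 by ring, show ω - 1 = ω - 2 + 1 by ring,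
    show θ - 1 - 1 = θ - 2 by ring, show θ - 1 + ψ - 1 = θ - 2 + ψ by ring,
    show θ + ψ - 1 - 1 = θ - 2 + ψ by ring, show θ + ψ - 1 + ψ - 1 = θ - 2 + ψ + ψ by ring]
  simp only [rpow_add hk, rpow_add (hu hk), rpow_one]
  ring

theorem concavity_quadratic_neg {θ ψ s x : ℝ} (hx : 0 < x) (hβ : 0 < β) (hθ : 0 < θ)
    (hs0 : 0 < θ + s) (hs1 : θ + s < 1) (hψ1 : ψ < 1) (hs : 0 < s) :
    (θ + s) * (θ + s - 1) * x ^ 2 + (2 * θ * (θ + s - 1) + s * (ψ - 1)) * x * β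
      + θ * (θ - 1) * β ^ 2 < 0 := by
  have hx2 : (θ + s) * (θ + s - 1) * x ^ 2 < 0 :=
    mul_neg_of_neg_of_pos (mul_neg_of_pos_of_neg hs0 (by linarith)) (by positivity)
  have hxβ : (2 * θ * (θ + s - 1) + s * (ψ - 1)) * x * β < 0 := by
    refine mul_neg_of_neg_of_pos (mul_neg_of_neg_of_pos ?_ hx) hβ
    linarith [mul_pos hθ (show 0 < 1 - (θ + s) by linarith), mul_pos hs (show 0 < 1 - ψ by linarith)]
  have hβ2 : θ * (θ - 1) * β ^ 2 < 0 :=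
    mul_neg_of_neg_of_pos (mul_neg_of_pos_of_neg hθ (by linarith)) (by positivity)
  linarith

theorem stmt_3_general (A α β θ ψ ω : ℝ) (hA : 0 < A) (hα : 0 < α) (hβ : 0 < β)
    (hθ : 0 < θ) (hs0 : 0 < θ + ω * ψ) (hs1 : θ + ω * ψ < 1)
    (hψ1 : ψ < 1) (hωψ0 : 0 < ω * ψ) :
    ∀ k : ℝ, 0 < k →
      deriv (deriv (fun k : ℝ => A * k ^ θ * (α * k ^ ψ + β) ^ ω)) k < 0 := by
  intro k hk
  rw [deriv_deriv_mul_rpow_mul_rpow_add A θ ω hα.le hβ hk]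
  exact mul_neg_of_pos_of_neg (by positivity)
    (concavity_quadratic_neg (by positivity) hβ hθ hs0 hs1 hψ1 hωψ0)

theorem stmt_3 (A α β θ ψ ω : ℝ) (hA : 0 < A) (hα : 0 < α) (hβ : 0 < β)
    (hθ : 0 < θ) (hθ1 : θ < 1) (hs0 : 0 < θ + ω * ψ) (hs1 : θ + ω * ψ < 1)
    (hψ1 : ψ < 1) (hωψ0 : 0 < ω * ψ) (hωψ1 : ω * ψ < 1)
    (hsign : (0 < ω ∧ 0 < ψ) ∨ (ω < 0 ∧ ψ < 0)) :
    ∀ k : ℝ, 0 < k →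
      deriv (deriv (fun k : ℝ => A * k ^ θ * (α * k ^ ψ + β) ^ ω)) k < 0 :=
  stmt_3_general A α β θ ψ ω hA hα hβ hθ hs0 hs1 hψ1 hωψ0
end

section
/- If A, α, β > 0, θ ∈ (0,1), 0 < θ + ωψ < 1, ψ < 1, 0 < ωψ < 1, ω and ψ of the same sign, then f'(k) tends to +∞ as k → 0⁺, where f(k) = A k^θ (α k^ψ + β)^ω. -/
/-!
Near `0` the derivative splits as `A θ k^(θ-1) (α k^ψ + β)^ω + ω ψ · (positive)`. The second
summand is nonnegative because `ωψ > 0`. The first blows up like a negative power of `k`: when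
`ω, ψ > 0` the factor `(α k^ψ + β)^ω` is at least `β^ω`, leaving `k^(θ-1)`; when `ω, ψ < 0` we have
`α k^ψ + β ≤ (α + β) k^ψ` on `(0, 1]`, so `(α k^ψ + β)^ω ≥ (α + β)^ω k^(ωψ)`, leaving
`k^(θ+ωψ-1)`.
-/

open Real Filter Set Topology

lemma hasDerivAt_mul_rpow_mul_add_rpow {A α β θ ψ ω x : ℝ} (hx : x ≠ 0)
    (hg : α * x ^ ψ + β ≠ 0) :
    HasDerivAt (fun k : ℝ => A * k ^ θ * (α * k ^ ψ + β) ^ ω)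
      (A * θ * x ^ (θ - 1) * (α * x ^ ψ + β) ^ ω
        + ω * ψ * (A * α * x ^ θ * x ^ (ψ - 1) * (α * x ^ ψ + β) ^ (ω - 1))) x := by
  have hinner := ((hasDerivAt_rpow_const (p := ψ) (Or.inl hx)).const_mul α).add_const β
  exact (((hasDerivAt_rpow_const (p := θ) (Or.inl hx)).const_mul A).mul
    (hinner.rpow_const (p := ω) (Or.inl hg))).congr_deriv (by ring)

lemma mul_rpow_le_mul_rpow_add_rpow {α β ψ ω k : ℝ} (hα : 0 ≤ α) (hβ : 0 < β) (hk0 : 0 < k)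
    (hk1 : k ≤ 1) (hψ : ψ ≤ 0) (hω : ω ≤ 0) :
    (α + β) ^ ω * k ^ (ψ * ω) ≤ (α * k ^ ψ + β) ^ ω := by
  have hkψ : 1 ≤ k ^ ψ := one_le_rpow_of_pos_of_le_one_of_nonpos hk0 hk1 hψ
  have hle : α * k ^ ψ + β ≤ (α + β) * k ^ ψ := by nlinarith
  calc (α + β) ^ ω * k ^ (ψ * ω) = ((α + β) * k ^ ψ) ^ ω := by
        rw [mul_rpow (by positivity) (by positivity), rpow_mul hk0.le]
    _ ≤ (α * k ^ ψ + β) ^ ω := rpow_le_rpow_of_nonpos (by positivity) hle hω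

lemma tendsto_mul_rpow_mul_add_rpow_nhdsGT_zero {A α β θ ψ ω : ℝ} (hA : 0 < A) (hα : 0 ≤ α)
    (hβ : 0 < β) (hθ : 0 < θ) (hθ1 : θ < 1) (hs1 : θ + ω * ψ < 1)
    (hsign : (0 < ω ∧ 0 < ψ) ∨ (ω < 0 ∧ ψ < 0)) :
    Tendsto (fun k : ℝ => A * θ * k ^ (θ - 1) * (α * k ^ ψ + β) ^ ω) (𝓝[>] 0) atTop := by
  rcases hsign with ⟨hω, hψ⟩ | ⟨hω, hψ⟩
  · refine tendsto_atTop_mono' _ ?_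
      ((tendsto_rpow_neg_nhdsGT_zero (by linarith : θ - 1 < 0)).const_mul_atTop
        (by positivity : 0 < A * θ * β ^ ω))
    filter_upwards [self_mem_nhdsWithin] with k (hk : 0 < k)
    have hbase : β ^ ω ≤ (α * k ^ ψ + β) ^ ω :=
      rpow_le_rpow hβ.le (le_add_of_nonneg_left (by positivity)) hω.le
    calc A * θ * β ^ ω * k ^ (θ - 1) = A * θ * k ^ (θ - 1) * β ^ ω := by ring
      _ ≤ A * θ * k ^ (θ - 1) * (α * k ^ ψ + β) ^ ω := by gcongr
  · refine tendsto_atTop_mono' _ ?_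
      ((tendsto_rpow_neg_nhdsGT_zero (by linarith : θ + ω * ψ - 1 < 0)).const_mul_atTop
        (by positivity : 0 < A * θ * (α + β) ^ ω))
    filter_upwards [Ioc_mem_nhdsGT zero_lt_one] with k ⟨hk0, hk1⟩
    have hbase := mul_rpow_le_mul_rpow_add_rpow hα hβ hk0 hk1 hψ.le hω.le
    calc A * θ * (α + β) ^ ω * k ^ (θ + ω * ψ - 1)
        = A * θ * k ^ (θ - 1) * ((α + β) ^ ω * k ^ (ψ * ω)) := by
          rw [show θ + ω * ψ - 1 = (θ - 1) + ψ * ω by ring, rpow_add hk0]; ring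
      _ ≤ A * θ * k ^ (θ - 1) * (α * k ^ ψ + β) ^ ω := by gcongr

theorem stmt_13_general (A α β θ ψ ω : ℝ) (hA : 0 < A) (hα : 0 < α) (hβ : 0 < β)
    (hθ : 0 < θ) (hθ1 : θ < 1) (hs1 : θ + ω * ψ < 1)
    (hωψ0 : 0 < ω * ψ)
    (hsign : (0 < ω ∧ 0 < ψ) ∨ (ω < 0 ∧ ψ < 0)) :
    Tendsto (deriv (fun k : ℝ => A * k ^ θ * (α * k ^ ψ + β) ^ ω)) (𝓝[>] 0) atTop := by
  have hderiv : deriv (fun k : ℝ => A * k ^ θ * (α * k ^ ψ + β) ^ ω) =ᶠ[𝓝[>] 0]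
      fun k => A * θ * k ^ (θ - 1) * (α * k ^ ψ + β) ^ ω
        + ω * ψ * (A * α * k ^ θ * k ^ (ψ - 1) * (α * k ^ ψ + β) ^ (ω - 1)) := by
    filter_upwards [self_mem_nhdsWithin] with k (hk : 0 < k)
    exact (hasDerivAt_mul_rpow_mul_add_rpow hk.ne' (by positivity)).deriv
  refine (Tendsto.atTop_add_zero_eventuallyLE ?_ ?_).congr' hderiv.symm
  · exact tendsto_mul_rpow_mul_add_rpow_nhdsGT_zero hA hα.le hβ hθ hθ1 hs1 hsign
  · filter_upwards [self_mem_nhdsWithin] with k (hk : 0 < k)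
    exact mul_nonneg hωψ0.le (by positivity)

theorem stmt_13 (A α β θ ψ ω : ℝ) (hA : 0 < A) (hα : 0 < α) (hβ : 0 < β)
    (hθ : 0 < θ) (hθ1 : θ < 1) (hs0 : 0 < θ + ω * ψ) (hs1 : θ + ω * ψ < 1)
    (hψ1 : ψ < 1) (hωψ0 : 0 < ω * ψ) (hωψ1 : ω * ψ < 1)
    (hsign : (0 < ω ∧ 0 < ψ) ∨ (ω < 0 ∧ ψ < 0)) :
    Tendsto (deriv (fun k : ℝ => A * k ^ θ * (α * k ^ ψ + β) ^ ω)) (𝓝[>] 0) atTop :=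
  stmt_13_general A α β θ ψ ω hA hα hβ hθ hθ1 hs1 hωψ0 hsign
end

section
/- Under the restrictions α, β > 0, 0 < θ < 1, 0 < θ+ωψ < 1, ψ ≠ 0, the elasticity of substitution σ(k) = N(k)/(N(k) − αβωψ² k^ψ) with N(k) = (α(θ+ωψ)k^ψ + βθ)(α(1−θ−ωψ)k^ψ + β(1−θ)) tends to 1 both as k → 0⁺ and as k → +∞. -/
/-!
Substituting `x = k ^ ψ`, the elasticity becomes `P(x) / (P(x) - E x)` for the quadratic
`P(x) = (A x + B)(C x + D)` with `A, B, C, D > 0` and `E = α β ω ψ²`. Since `P(0) = B D ≠ 0`, this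
ratio tends to `1` as `x → 0`; since `E x` has lower degree than `P`, the two polynomials `P` and
`P - E X` have the same leading term and the ratio also tends to `1` as `x → ∞`. Finally `k ^ ψ`
sends `k → 0⁺` and `k → ∞` to `x → 0` and `x → ∞`, in one order or the other according to the
sign of `ψ`.
-/

open Real Filter Set Topology Polynomial

namespace Polynomial

theorem div_sub_tendsto_nhds_one {𝕜 : Type*} [NormedField 𝕜] {P R : 𝕜[X]} {a : 𝕜}
    (hP : P.eval a ≠ 0) (hR : R.eval a = 0) :
    Tendsto (fun x => P.eval x / (P - R).eval x) (𝓝 a) (𝓝 1) := by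
  have h : Tendsto (fun x => P.eval x / (P - R).eval x) (𝓝 a)
      (𝓝 (P.eval a / (P - R).eval a)) :=
    (P.continuous.tendsto a).div ((P - R).continuous.tendsto a) (by simpa [hR] using hP)
  simpa [hR, hP] using h

theorem div_sub_tendsto_atTop_one {𝕜 : Type*} [NormedField 𝕜] [LinearOrder 𝕜]
    [IsStrictOrderedRing 𝕜] [OrderTopology 𝕜] {P R : 𝕜[X]} (h : R.degree < P.degree) :
    Tendsto (fun x => P.eval x / (P - R).eval x) atTop (𝓝 1) := by
  have hP : P.leadingCoeff ≠ 0 := leadingCoeff_ne_zero.mpr (ne_zero_of_degree_gt h)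
  simpa [leadingCoeff_sub_of_degree_lt h, hP] using
    div_tendsto_atTop_leadingCoeff_div_of_degree_eq P (P - R)
      (degree_sub_eq_left_of_degree_lt h).symm

end Polynomial

theorem tendsto_rpow_nhdsGT_zero_nhds_zero {y : ℝ} (hy : 0 < y) :
    Tendsto (fun x : ℝ => x ^ y) (𝓝[>] 0) (𝓝 0) := by
  simpa [zero_rpow hy.ne'] using
    (continuousAt_rpow_const 0 y (Or.inr hy.le)).tendsto.mono_left nhdsWithin_le_nhds

theorem tendsto_linear_mul_linear_div_sub_one {a b c d : ℝ} (e : ℝ) (ha : a ≠ 0) (hb : b ≠ 0)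
    (hc : c ≠ 0) (hd : d ≠ 0) :
    Tendsto (fun x => (a * x + b) * (c * x + d) / ((a * x + b) * (c * x + d) - e * x))
      (𝓝 0) (𝓝 1) ∧
    Tendsto (fun x => (a * x + b) * (c * x + d) / ((a * x + b) * (c * x + d) - e * x))
      atTop (𝓝 1) := by
  let P : ℝ[X] := (C a * X + C b) * (C c * X + C d)
  let R : ℝ[X] := C e * X
  have hdeg : R.degree < P.degree := by
    have hP : P.degree = 2 := by
      rw [degree_mul, degree_linear ha, degree_linear hc]
      rfl
    exact hP ▸ (degree_C_mul_X_le _).trans_lt (by decide)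
  have hzero := div_sub_tendsto_nhds_one (a := 0) (P := P) (R := R)
    (by simp [P, hb, hd]) (by simp [R])
  have htop := div_sub_tendsto_atTop_one hdeg
  simp only [P, R, eval_sub, eval_mul, eval_add, eval_C, eval_X] at hzero htop
  exact ⟨hzero, htop⟩

theorem stmt_18_general (α β θ ψ ω : ℝ) (hα : 0 < α) (hβ : 0 < β)
    (hθ : 0 < θ) (hθ1 : θ < 1) (hs0 : 0 < θ + ω * ψ) (hs1 : θ + ω * ψ < 1)
    (hψ : ψ ≠ 0)
    (N : ℝ → ℝ)
    (hN : ∀ k : ℝ, N k = (α * (θ + ω * ψ) * k ^ ψ + β * θ) *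
        (α * (1 - θ - ω * ψ) * k ^ ψ + β * (1 - θ))) :
    Tendsto (fun k : ℝ => N k / (N k - α * β * ω * ψ ^ 2 * k ^ ψ)) (𝓝[>] 0) (𝓝 1) ∧
    Tendsto (fun k : ℝ => N k / (N k - α * β * ω * ψ ^ 2 * k ^ ψ)) atTop (𝓝 1) := by
  obtain ⟨hzero, htop⟩ := tendsto_linear_mul_linear_div_sub_one (α * β * ω * ψ ^ 2)
    (mul_pos hα hs0).ne' (mul_pos hβ hθ).ne' (mul_pos hα (by linarith : 0 < 1 - θ - ω * ψ)).ne'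
    (mul_pos hβ (by linarith : 0 < 1 - θ)).ne'
  simp only [hN]
  rcases hψ.lt_or_gt with hneg | hpos
  · exact ⟨htop.comp (tendsto_rpow_neg_nhdsGT_zero hneg),
      hzero.comp (by simpa using tendsto_rpow_neg_atTop (neg_pos.mpr hneg))⟩
  · exact ⟨hzero.comp (tendsto_rpow_nhdsGT_zero_nhds_zero hpos),
      htop.comp (tendsto_rpow_atTop hpos)⟩

theorem stmt_18 (α β θ ψ ω : ℝ) (hα : 0 < α) (hβ : 0 < β)
    (hθ : 0 < θ) (hθ1 : θ < 1) (hs0 : 0 < θ + ω * ψ) (hs1 : θ + ω * ψ < 1)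
    (hψ : ψ ≠ 0)
    (N : ℝ → ℝ)
    (hN : ∀ k : ℝ, N k = (α * (θ + ω * ψ) * k ^ ψ + β * θ) *
        (α * (1 - θ - ω * ψ) * k ^ ψ + β * (1 - θ)))
    (hden : ∀ k : ℝ, 0 < k → 0 < N k - α * β * ω * ψ ^ 2 * k ^ ψ) :
    Tendsto (fun k : ℝ => N k / (N k - α * β * ω * ψ ^ 2 * k ^ ψ)) (𝓝[>] 0) (𝓝 1) ∧
    Tendsto (fun k : ℝ => N k / (N k - α * β * ω * ψ ^ 2 * k ^ ψ)) atTop (𝓝 1) :=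
  stmt_18_general α β θ ψ ω hα hβ hθ hθ1 hs0 hs1 hψ N hN
end
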